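/- Let p: ℝ → ℝ be continuous and 2π-periodic. Then for all σ ∈ ℝ, a > 0 and i ∈ {1,2}: 𝓘ᵢ(σ + π, a) = 𝓘ᵢ(σ, a) and 𝓘ᵢ(σ + π/2, 1/a) = −𝓘ᵢ(σ, a). -/
import Mathlib


open Real intervalIntegral

/-- 𝓘₁(σ,a). -/
noncomputable def I1 (p : ℝ → ℝ) (σ a : ℝ) : ℝ :=
  ∫ α in (0:ℝ)..(2 * π), p (α + σ) *
    ((a ^ 2)⁻¹ * Real.cos α ^ 2 - a ^ 2 * Real.sin α ^ 2) *
    ((a ^ 2)⁻¹ * Real.cos α ^ 2 + a ^ 2 * Real.sin α ^ 2) ^ (-(5:ℝ) / 2)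

/-- 𝓘₂(σ,a). -/
noncomputable def I2 (p : ℝ → ℝ) (σ a : ℝ) : ℝ :=
  ∫ α in (0:ℝ)..(2 * π), p (α + σ) *
    (2 * Real.sin α * Real.cos α) *
    ((a ^ 2)⁻¹ * Real.cos α ^ 2 + a ^ 2 * Real.sin α ^ 2) ^ (-(5:ℝ) / 2)

lemma shift_integral (F : ℝ → ℝ) (hF : Function.Periodic F (2 * π)) (c : ℝ) :
    ∫ α in (0:ℝ)..(2 * π), F (α + c) = ∫ α in (0:ℝ)..(2 * π), F α := by
  rw [intervalIntegral.integral_comp_add_right]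
  have := hF.intervalIntegral_add_eq c 0
  simpa [add_comm] using this

/-- Symmetries of the integrals 𝓘₁ and 𝓘₂:
𝓘ᵢ(σ+π, a) = 𝓘ᵢ(σ, a) and 𝓘ᵢ(σ+π/2, 1/a) = -𝓘ᵢ(σ, a) for i = 1, 2. -/
theorem I1_I2_symmetries
    (p : ℝ → ℝ) (hp : Continuous p) (hper : ∀ α, p (α + 2 * π) = p α) :
    ∀ σ : ℝ, ∀ a : ℝ, 0 < a →
      I1 p (σ + π) a = I1 p σ a ∧
      I2 p (σ + π) a = I2 p σ a ∧
      I1 p (σ + π / 2) a⁻¹ = -I1 p σ a ∧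
      I2 p (σ + π / 2) a⁻¹ = -I2 p σ a := by
  intro σ a ha
  set f1 : ℝ → ℝ := fun α => p (α + σ) *
    ((a ^ 2)⁻¹ * Real.cos α ^ 2 - a ^ 2 * Real.sin α ^ 2) *
    ((a ^ 2)⁻¹ * Real.cos α ^ 2 + a ^ 2 * Real.sin α ^ 2) ^ (-(5:ℝ) / 2) with hf1
  set f2 : ℝ → ℝ := fun α => p (α + σ) *
    (2 * Real.sin α * Real.cos α) *
    ((a ^ 2)⁻¹ * Real.cos α ^ 2 + a ^ 2 * Real.sin α ^ 2) ^ (-(5:ℝ) / 2) with hf2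
  have hp2 : ∀ x, p (x + σ + 2 * π) = p (x + σ) := fun x => by
    rw [show x + σ + 2 * π = (x + σ) + 2 * π by ring, hper]
  have hper1 : Function.Periodic f1 (2 * π) := by
    intro x
    simp only [hf1, Real.cos_add_two_pi, Real.sin_add_two_pi]
    rw [show x + 2 * π + σ = x + σ + 2 * π by ring, hp2]
  have hper2 : Function.Periodic f2 (2 * π) := by
    intro x
    simp only [hf2, Real.cos_add_two_pi, Real.sin_add_two_pi]
    rw [show x + 2 * π + σ = x + σ + 2 * π by ring, hp2]
  refine ⟨?_, ?_, ?_, ?_⟩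
  · rw [show I1 p σ a = ∫ α in (0:ℝ)..(2*π), f1 α from rfl,
      ← shift_integral f1 hper1 π]
    refine intervalIntegral.integral_congr fun x _ => ?_
    simp only [hf1, Real.cos_add_pi, Real.sin_add_pi, neg_sq]
    rw [show x + π + σ = x + (σ + π) by ring]
  · rw [show I2 p σ a = ∫ α in (0:ℝ)..(2*π), f2 α from rfl,
      ← shift_integral f2 hper2 π]
    refine intervalIntegral.integral_congr fun x _ => ?_
    simp only [hf2, Real.cos_add_pi, Real.sin_add_pi]
    rw [show x + π + σ = x + (σ + π) by ring]
    ring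
  · rw [show -I1 p σ a = -∫ α in (0:ℝ)..(2*π), f1 α from rfl,
      ← shift_integral f1 hper1 (π/2), ← intervalIntegral.integral_neg]
    refine intervalIntegral.integral_congr fun x _ => ?_
    simp only [hf1, Real.cos_add_pi_div_two, Real.sin_add_pi_div_two, neg_sq,
      inv_pow, inv_inv]
    rw [show x + π/2 + σ = x + (σ + π/2) by ring,
      show (a^2)⁻¹ * Real.sin x ^ 2 + a^2 * Real.cos x ^ 2
        = a^2 * Real.cos x ^ 2 + (a^2)⁻¹ * Real.sin x ^ 2 by ring]
    ring
  · rw [show -I2 p σ a = -∫ α in (0:ℝ)..(2*π), f2 α from rfl,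
      ← shift_integral f2 hper2 (π/2), ← intervalIntegral.integral_neg]
    refine intervalIntegral.integral_congr fun x _ => ?_
    simp only [hf2, Real.cos_add_pi_div_two, Real.sin_add_pi_div_two, neg_sq,
      inv_pow, inv_inv]
    rw [show x + π/2 + σ = x + (σ + π/2) by ring,
      show (a^2)⁻¹ * Real.sin x ^ 2 + a^2 * Real.cos x ^ 2
        = a^2 * Real.cos x ^ 2 + (a^2)⁻¹ * Real.sin x ^ 2 by ring]
    ring
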